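/- Let F : ℝᵐ → ℝᵐ be C², with flow having periodic orbit x^γ(t) of period T and frequency ω, and let Φ be a C³ phase map satisfying ∇Φ(x)·F(x) = ω in a neighborhood of the orbit. Then along the orbit, (d/dt)∇²Φ(x^γ(t)) = -∇²F (∇Φ ⊗ I) - (DF)ᵀ ∇²Φ - ∇²Φ DF, where ∇²F = [∇²F₁ ⋯ ∇²F_m] is the m×m² matrix of Hessians of the components of F and all quantities are evaluated at x^γ(t). -/

import Mathlib

/-!
Differentiating the phase identity `DΦ(x) (F x) = ω` once, and using the symmetry of `D²Φ`, gives
the identity of linear maps `D²Φ(x) (F x) = -DΦ(x) ∘ DF(x)` on the open set `U`. Differentiating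
it once more, and using the symmetry of `D³Φ` in its first two slots, expresses
`D³Φ(x) (F x) v w`, which is the derivative of `D²Φ(γ s) v w` along a trajectory, through `DΦ`,
`D²Φ`, `DF` and `D²F`. The theorem is this identity for standard basis vectors `v` and `w`.
-/

open Filter Topology

theorem sum_smul_apply_single {R ι M L : Type*} [Semiring R] [Fintype ι] [DecidableEq ι]
    [AddCommMonoid M] [Module R M] [FunLike L (ι → R) M] [LinearMapClass L R (ι → R) M]
    (f : L) (v : ι → R) : ∑ k, v k • f (Pi.single k 1) = f v := by
  conv_rhs => rw [← Finset.univ_sum_single v, map_sum]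
  simp [← map_smul, ← Pi.single_smul']

section Calculus

variable {𝕜 E G H : Type*} [NontriviallyNormedField 𝕜]
  [NormedAddCommGroup E] [NormedSpace 𝕜 E] [NormedAddCommGroup G] [NormedSpace 𝕜 G]
  [NormedAddCommGroup H] [NormedSpace 𝕜 H]

theorem ContDiffAt.differentiableAt_fderiv {f : E → G} {x : E} {n : WithTop ℕ∞}
    (hf : ContDiffAt 𝕜 n f x) (hn : 2 ≤ n) : DifferentiableAt 𝕜 (fderiv 𝕜 f) x :=
  (hf.fderiv_right (m := 1) (by simpa [one_add_one_eq_two] using hn)).differentiableAt one_ne_zero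

theorem fderiv_clm_apply_const {c : E → G →L[𝕜] H} {x : E} (hc : DifferentiableAt 𝕜 c x)
    (u : G) (v : E) : fderiv 𝕜 (fun y => c y u) x v = fderiv 𝕜 c x v u := by
  simp [fderiv_clm_apply hc (differentiableAt_const u)]

variable {ι : Type*} [Fintype ι]

theorem sum_fderiv_component_smul [DecidableEq ι] {M L : Type*} [AddCommMonoid M] [Module 𝕜 M]
    [FunLike L (ι → 𝕜) M] [LinearMapClass L 𝕜 (ι → 𝕜) M] {f : E → ι → 𝕜} {x : E}
    (hf : DifferentiableAt 𝕜 f x) (u : E) (g : L) :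
    ∑ k, fderiv 𝕜 (fun y => f y k) x u • g (Pi.single k 1) = g (fderiv 𝕜 f x u) := by
  simp only [fderiv_apply hf, ContinuousLinearMap.comp_apply, ContinuousLinearMap.proj_apply]
  exact sum_smul_apply_single g _

theorem fderiv_fderiv_apply_component {f : E → ι → 𝕜} {x : E}
    (hf : ∀ᶠ y in 𝓝 x, DifferentiableAt 𝕜 f y) (hf' : DifferentiableAt 𝕜 (fderiv 𝕜 f) x)
    (k : ι) (u v : E) :
    fderiv 𝕜 (fun y => fderiv 𝕜 (fun z => f z k) y u) x v = fderiv 𝕜 (fderiv 𝕜 f) x v u k := by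
  have hcomp : (fun y => fderiv 𝕜 (fun z => f z k) y u) =ᶠ[𝓝 x] fun y => fderiv 𝕜 f y u k :=
    hf.mono fun y hy => by simp [fderiv_apply hy k]
  rw [hcomp.fderiv_eq, fderiv_apply (hf'.clm_apply (differentiableAt_const u)) k]
  simp [fderiv_clm_apply_const hf']

end Calculus

section PhaseIdentity

variable {E : Type*} [NormedAddCommGroup E] [NormedSpace ℝ E]
  {F : E → E} {Φ : E → ℝ} {U : Set E} {ω : ℝ} {x : E}

theorem fderiv_fderiv_apply_eq_neg_comp_of_phase (hU : IsOpen U) (hΦ : ContDiffOn ℝ 2 Φ U)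
    (hF : DifferentiableOn ℝ F U) (hphase : ∀ y ∈ U, fderiv ℝ Φ y (F y) = ω) (hx : x ∈ U) :
    fderiv ℝ (fderiv ℝ Φ) x (F x) = -(fderiv ℝ Φ x).comp (fderiv ℝ F x) := by
  have hΦx : ContDiffAt ℝ 2 Φ x := hΦ.contDiffAt (hU.mem_nhds hx)
  have hderiv := (hΦx.differentiableAt_fderiv le_rfl).hasFDerivAt.clm_apply
    ((hF x hx).differentiableAt (hU.mem_nhds hx)).hasFDerivAt
  have hconst : HasFDerivAt (fun y => fderiv ℝ Φ y (F y)) (0 : E →L[ℝ] ℝ) x :=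
    (hasFDerivAt_const ω x).congr_of_eventuallyEq (eventually_of_mem (hU.mem_nhds hx) hphase)
  ext v
  have hv := congr($(hderiv.unique hconst) v)
  simp only [add_apply, ContinuousLinearMap.comp_apply, ContinuousLinearMap.flip_apply,
    zero_apply] at hv
  rw [hΦx.isSymmSndFDerivAt (by simp) (F x) v, neg_apply, ContinuousLinearMap.comp_apply]
  linarith

theorem fderiv_fderiv_fderiv_apply_of_phase (hU : IsOpen U) (hΦ : ContDiffOn ℝ 3 Φ U)
    (hF : ContDiffOn ℝ 2 F U) (hphase : ∀ y ∈ U, fderiv ℝ Φ y (F y) = ω) (hx : x ∈ U)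
    (v w : E) :
    fderiv ℝ (fderiv ℝ (fderiv ℝ Φ)) x (F x) v w =
      -(fderiv ℝ (fderiv ℝ Φ) x (fderiv ℝ F x v) w + fderiv ℝ (fderiv ℝ Φ) x v (fderiv ℝ F x w)
        + fderiv ℝ Φ x (fderiv ℝ (fderiv ℝ F) x v w)) := by
  have hFx : ContDiffAt ℝ 2 F x := hF.contDiffAt (hU.mem_nhds hx)
  have hDΦ : ContDiffAt ℝ 2 (fderiv ℝ Φ) x :=
    (hΦ.contDiffAt (hU.mem_nhds hx)).fderiv_right (by norm_num)
  have hlhs := (hDΦ.differentiableAt_fderiv le_rfl).hasFDerivAt.clm_apply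
    (hFx.differentiableAt two_ne_zero).hasFDerivAt
  have hrhs := ((hDΦ.differentiableAt two_ne_zero).hasFDerivAt.clm_comp
    (hFx.differentiableAt_fderiv le_rfl).hasFDerivAt).neg
  have heq : (fun y => fderiv ℝ (fderiv ℝ Φ) y (F y))
      =ᶠ[𝓝 x] fun y => -(fderiv ℝ Φ y).comp (fderiv ℝ F y) :=
    eventually_of_mem (hU.mem_nhds hx) fun y hy =>
      fderiv_fderiv_apply_eq_neg_comp_of_phase hU (hΦ.of_le (by norm_num))
        (hF.differentiableOn two_ne_zero) hphase hy
  have hvw := congr($(hlhs.unique (hrhs.congr_of_eventuallyEq heq)) v w)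
  simp only [add_apply, neg_apply, ContinuousLinearMap.comp_apply,
    ContinuousLinearMap.flip_apply, ContinuousLinearMap.compL_apply] at hvw
  rw [hDΦ.isSymmSndFDerivAt (by simp) (F x) v]
  linarith

theorem hasDerivAt_fderiv_fderiv_apply_of_phase (hU : IsOpen U) (hΦ : ContDiffOn ℝ 3 Φ U)
    (hF : ContDiffOn ℝ 2 F U) (hphase : ∀ y ∈ U, fderiv ℝ Φ y (F y) = ω) {γ : ℝ → E} {t : ℝ}
    (hγU : γ t ∈ U) (hγ : HasDerivAt γ (F (γ t)) t) (v w : E) :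
    HasDerivAt (fun s => fderiv ℝ (fderiv ℝ Φ) (γ s) v w)
      (-(fderiv ℝ (fderiv ℝ Φ) (γ t) (fderiv ℝ F (γ t) v) w
        + fderiv ℝ (fderiv ℝ Φ) (γ t) v (fderiv ℝ F (γ t) w)
        + fderiv ℝ Φ (γ t) (fderiv ℝ (fderiv ℝ F) (γ t) v w))) t := by
  have hD2Φ : DifferentiableAt ℝ (fderiv ℝ (fderiv ℝ Φ)) (γ t) :=
    ((hΦ.contDiffAt (hU.mem_nhds hγU)).fderiv_right (m := 2) (by norm_num)).differentiableAt_fderiv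
      le_rfl
  have hD2Φv := hD2Φ.clm_apply (differentiableAt_const v)
  have hchain := (hD2Φv.clm_apply (differentiableAt_const w)).hasFDerivAt.comp_hasDerivAt t hγ
  rw [fderiv_clm_apply_const hD2Φv, fderiv_clm_apply_const hD2Φ,
    fderiv_fderiv_fderiv_apply_of_phase hU hΦ hF hphase hγU] at hchain
  exact hchain

end PhaseIdentity

theorem stmt_11_general {m : ℕ}
    (F : (Fin m → ℝ) → (Fin m → ℝ)) (Φ : (Fin m → ℝ) → ℝ)
    (U : Set (Fin m → ℝ)) (hU : IsOpen U)
    (hF : ContDiffOn ℝ 2 F U) (hΦ : ContDiffOn ℝ 3 Φ U)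
    (γ : ℝ → Fin m → ℝ) (ω : ℝ)
    (hγU : ∀ t, γ t ∈ U)
    (hγ : ∀ t, HasDerivAt γ (F (γ t)) t)
    (hphase : ∀ x ∈ U, (∑ i, fderiv ℝ Φ x (Pi.single i 1) * F x i) = ω)
    (Z : (Fin m → ℝ) → Fin m → ℝ)
    (hZ : ∀ x i, Z x i = fderiv ℝ Φ x (Pi.single i 1))
    (Hs : (Fin m → ℝ) → Fin m → Fin m → ℝ)
    (hHs : ∀ x i j, Hs x i j =
      fderiv ℝ (fun y => fderiv ℝ Φ y (Pi.single j 1)) x (Pi.single i 1))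
    (DF : (Fin m → ℝ) → Fin m → Fin m → ℝ)
    (hDF : ∀ x i j, DF x i j = fderiv ℝ (fun y => F y i) x (Pi.single j 1))
    (D2F : (Fin m → ℝ) → Fin m → Fin m → Fin m → ℝ)
    (hD2F : ∀ x k i j, D2F x k i j =
      fderiv ℝ (fun y => fderiv ℝ (fun z => F z k) y (Pi.single j 1)) x (Pi.single i 1)) :
    ∀ t (i j : Fin m),
      HasDerivAt (fun s => Hs (γ s) i j)
        (-(∑ k, D2F (γ t) k i j * Z (γ t) k)
          - (∑ k, DF (γ t) k i * Hs (γ t) k j)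
          - (∑ k, Hs (γ t) i k * DF (γ t) k j)) t := by
  have hFd : ∀ x ∈ U, DifferentiableAt ℝ F x := fun x hx =>
    (hF.contDiffAt (hU.mem_nhds hx)).differentiableAt two_ne_zero
  have hHs_eq : ∀ x ∈ U, ∀ a b,
      Hs x a b = fderiv ℝ (fderiv ℝ Φ) x (Pi.single a 1) (Pi.single b 1) := fun x hx a b => by
    rw [hHs, fderiv_clm_apply_const ((hΦ.contDiffAt (hU.mem_nhds hx)).differentiableAt_fderiv
      (by norm_num))]
  have hphase' : ∀ x ∈ U, fderiv ℝ Φ x (F x) = ω := fun x hx => by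
    simpa [← hphase x hx, mul_comm] using (sum_smul_apply_single (fderiv ℝ Φ x) (F x)).symm
  intro t i j
  have hx : γ t ∈ U := hγU t
  have hZ_sum : ∑ k, D2F (γ t) k i j * Z (γ t) k =
      fderiv ℝ Φ (γ t) (fderiv ℝ (fderiv ℝ F) (γ t) (Pi.single i 1) (Pi.single j 1)) := by
    simpa [hD2F, hZ, fderiv_fderiv_apply_component (eventually_of_mem (hU.mem_nhds hx) hFd)
      ((hF.contDiffAt (hU.mem_nhds hx)).differentiableAt_fderiv le_rfl), mul_comm]
      using sum_smul_apply_single (fderiv ℝ Φ (γ t))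
        (fderiv ℝ (fderiv ℝ F) (γ t) (Pi.single i 1) (Pi.single j 1))
  have hDF_sum : ∑ k, DF (γ t) k i * Hs (γ t) k j =
      fderiv ℝ (fderiv ℝ Φ) (γ t) (fderiv ℝ F (γ t) (Pi.single i 1)) (Pi.single j 1) := by
    simpa [hDF, hHs_eq _ hx] using sum_fderiv_component_smul (hFd _ hx) (Pi.single i 1)
      ((fderiv ℝ (fderiv ℝ Φ) (γ t)).flip (Pi.single j 1))
  have hHs_sum : ∑ k, Hs (γ t) i k * DF (γ t) k j =
      fderiv ℝ (fderiv ℝ Φ) (γ t) (Pi.single i 1) (fderiv ℝ F (γ t) (Pi.single j 1)) := by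
    simpa [hDF, hHs_eq _ hx, mul_comm] using sum_fderiv_component_smul (hFd _ hx)
      (Pi.single j 1) (fderiv ℝ (fderiv ℝ Φ) (γ t) (Pi.single i 1))
  rw [funext fun s => hHs_eq (γ s) (hγU s) i j, hZ_sum, hDF_sum, hHs_sum]
  convert hasDerivAt_fderiv_fderiv_apply_of_phase hU hΦ hF hphase' hx (hγ t)
    (Pi.single i 1) (Pi.single j 1) using 1
  ring

theorem stmt_11 {m : ℕ}
    (F : (Fin m → ℝ) → (Fin m → ℝ)) (Φ : (Fin m → ℝ) → ℝ)
    (U : Set (Fin m → ℝ)) (hU : IsOpen U)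
    (hF : ContDiffOn ℝ 2 F U) (hΦ : ContDiffOn ℝ 3 Φ U)
    (γ : ℝ → Fin m → ℝ) (T ω : ℝ) (hT : 0 < T) (hω : ω = 2 * Real.pi / T)
    (hper : Function.Periodic γ T)
    (hγU : ∀ t, γ t ∈ U)
    (hγ : ∀ t, HasDerivAt γ (F (γ t)) t)
    (hphase : ∀ x ∈ U, (∑ i, fderiv ℝ Φ x (Pi.single i 1) * F x i) = ω)
    (Z : (Fin m → ℝ) → Fin m → ℝ)
    (hZ : ∀ x i, Z x i = fderiv ℝ Φ x (Pi.single i 1))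
    (Hs : (Fin m → ℝ) → Fin m → Fin m → ℝ)
    (hHs : ∀ x i j, Hs x i j =
      fderiv ℝ (fun y => fderiv ℝ Φ y (Pi.single j 1)) x (Pi.single i 1))
    (DF : (Fin m → ℝ) → Fin m → Fin m → ℝ)
    (hDF : ∀ x i j, DF x i j = fderiv ℝ (fun y => F y i) x (Pi.single j 1))
    (D2F : (Fin m → ℝ) → Fin m → Fin m → Fin m → ℝ)
    (hD2F : ∀ x k i j, D2F x k i j =
      fderiv ℝ (fun y => fderiv ℝ (fun z => F z k) y (Pi.single j 1)) x (Pi.single i 1)) :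
    ∀ t (i j : Fin m),
      HasDerivAt (fun s => Hs (γ s) i j)
        (-(∑ k, D2F (γ t) k i j * Z (γ t) k)
          - (∑ k, DF (γ t) k i * Hs (γ t) k j)
          - (∑ k, Hs (γ t) i k * DF (γ t) k j)) t :=
  stmt_11_general F Φ U hU hF hΦ γ ω hγU hγ hphase Z hZ Hs hHs DF hDF D2F hD2F
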